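/- Assume in addition that h is nondecreasing. If s > (2|m|r + 2σ²εr² + h(b) + rσ²/b)/ϱ, then: k^{(s)} is nondecreasing on [0,b]; (k^{(s)})''(x) > 2r/b for every x ∈ [0,b]; β^{(s)} ≤ b/2 < b; and (k^{(s)})''(β^{(s)}) > 0. -/

import Mathlib

/-!
Wherever `k ≥ s`, the equation together with `|F| ≤ 2r`, `ε ≥ 0` and `h ≤ h(b)` gives
`k'' ≥ (2/σ²)(ϱs − 2|m|r − 2σ²εr² − h(b)) > 2r/b`. Since `k(0) = s` and `k'(0) = 0`, a continuous
induction shows that `k` never falls below `s`, so `k'' > 2r/b` on all of `[0, b]`; hence `k'` is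
nonnegative (and `k` nondecreasing), and `k'(x) ≥ 2rx/b` reaches `r` by `x = b/2`.
-/

open Set

/-- k (with derivatives k', k'') is a C² solution on [0,b] of the Cauchy problem
k'' + (2/σ²)(m·F(k') + ½σ²ε·F(k')² − ϱ·k + h(x)) = 0, k(0) = s, k'(0) = 0. -/
def IsCauchySolution (b σ ϱ m : ℝ) (h F : ℝ → ℝ) (ε s : ℝ) (k k' k'' : ℝ → ℝ) : Prop :=
  (∀ x ∈ Icc (0:ℝ) b, HasDerivWithinAt k (k' x) (Icc (0:ℝ) b) x) ∧
  (∀ x ∈ Icc (0:ℝ) b, HasDerivWithinAt k' (k'' x) (Icc (0:ℝ) b) x) ∧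
  ContinuousOn k'' (Icc (0:ℝ) b) ∧
  (∀ x ∈ Icc (0:ℝ) b,
    k'' x + (2 / σ ^ 2) * (m * F (k' x) + (1 / 2) * σ ^ 2 * ε * (F (k' x)) ^ 2
      - ϱ * k x + h x) = 0) ∧
  k 0 = s ∧ k' 0 = 0

open Filter Topology

theorem monotoneOn_Icc_of_hasDerivWithinAt_nonneg {f f' : ℝ → ℝ} {s : Set ℝ} {a b : ℝ}
    (hs : Icc a b ⊆ s) (hf : ∀ x ∈ Icc a b, HasDerivWithinAt f (f' x) s x)
    (hf' : ∀ x ∈ Ioo a b, 0 ≤ f' x) : MonotoneOn f (Icc a b) := by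
  refine monotoneOn_of_hasDerivWithinAt_nonneg (convex_Icc a b)
    (fun x hx => (hf x hx).continuousWithinAt.mono hs) (fun x hx => ?_) (by rwa [interior_Icc])
  rw [interior_Icc] at hx ⊢
  exact (hf x (Ioo_subset_Icc_self hx)).mono (Ioo_subset_Icc_self.trans hs)

theorem add_mul_sub_le_of_le_hasDerivWithinAt {f f' : ℝ → ℝ} {a b c x : ℝ}
    (hf : ∀ y ∈ Icc a b, HasDerivWithinAt f (f' y) (Icc a b) y)
    (hc : ∀ y ∈ Ioo a b, c ≤ f' y) (hx : x ∈ Icc a b) : f a + c * (x - a) ≤ f x := by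
  have hg : MonotoneOn (fun y => f y - c * y) (Icc a b) :=
    monotoneOn_Icc_of_hasDerivWithinAt_nonneg subset_rfl
      (fun y hy => (hf y hy).sub (((hasDerivWithinAt_id y _).const_mul c).congr_deriv (mul_one c)))
      (fun y hy => sub_nonneg.2 (hc y hy))
  have := hg (left_mem_Icc.2 (hx.1.trans hx.2)) hx hx.1
  simp only at this
  linarith

/- Continuous induction on `{x | s ≤ k x}`: once `k ≥ s` on `[a, t]`, continuity of `k''` keeps
`k'' > 0` on some `[a, u]` with `u > t`, so `k'` and then `k` are nondecreasing there. -/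
theorem le_of_deriv_nonneg_of_secondDeriv_pos {k k' k'' : ℝ → ℝ} {a b s : ℝ}
    (hk : ∀ x ∈ Icc a b, HasDerivWithinAt k (k' x) (Icc a b) x)
    (hk' : ∀ x ∈ Icc a b, HasDerivWithinAt k' (k'' x) (Icc a b) x)
    (hk'' : ContinuousOn k'' (Icc a b)) (hk'a : 0 ≤ k' a) (hka : s ≤ k a)
    (hpos : ∀ x ∈ Icc a b, s ≤ k x → 0 < k'' x) :
    ∀ x ∈ Icc a b, s ≤ k x := by
  have hclosed : IsClosed ({x | s ≤ k x} ∩ Icc a b) := by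
    rw [inter_comm]
    exact ContinuousOn.preimage_isClosed_of_isClosed (fun x hx => (hk x hx).continuousWithinAt)
      isClosed_Icc isClosed_Ici
  refine fun x hx =>
    hclosed.Icc_subset_of_forall_mem_nhdsGT_of_Icc_subset hka (fun t ht hat => ?_) hx
  obtain ⟨u, htu, hu⟩ : ∃ u, t < u ∧ Icc t u ⊆ {y | 0 < k'' y} ∩ Icc a b := by
    have hab : Icc a b ∈ 𝓝[≥] t := Icc_mem_nhdsGE_of_mem ht
    have hk''t : 0 < k'' t := hpos t (Ico_subset_Icc_self ht) (hat ⟨ht.1, le_rfl⟩)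
    exact mem_nhdsGE_iff_exists_Icc_subset.1 <| inter_mem
      (nhdsWithin_le_of_mem hab ((hk'' t (Ico_subset_Icc_self ht)).eventually (lt_mem_nhds hk''t)))
      hab
  have hsub : Icc a u ⊆ Icc a b := Icc_subset_Icc le_rfl (hu ⟨htu.le, le_rfl⟩).2.2
  have hk''pos : ∀ y ∈ Icc a u, 0 < k'' y := by
    intro y hy
    rcases le_or_gt y t with hyt | hty
    · exact hpos y (hsub hy) (hat ⟨hy.1, hyt⟩)
    · exact (hu ⟨hty.le, hy.2⟩).1
  have hk'mono : MonotoneOn k' (Icc a u) :=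
    monotoneOn_Icc_of_hasDerivWithinAt_nonneg hsub (fun y hy => hk' y (hsub hy))
      (fun y hy => (hk''pos y (Ioo_subset_Icc_self hy)).le)
  have hau : a ∈ Icc a u := left_mem_Icc.2 (ht.1.trans htu.le)
  have hkmono : MonotoneOn k (Icc a u) :=
    monotoneOn_Icc_of_hasDerivWithinAt_nonneg hsub (fun y hy => hk y (hsub hy))
      (fun y hy => hk'a.trans (hk'mono hau (Ioo_subset_Icc_self hy) hy.1.le))
  exact mem_of_superset (Icc_mem_nhdsGT_of_mem ⟨ht.1, htu⟩)
    fun y hy => hka.trans (hkmono hau hy hy.1)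

theorem csInf_insert_mem_Icc {α : Type*} [ConditionallyCompleteLattice α] {S : Set α}
    {b c x : α} (hb : c ≤ b) (hS : ∀ y ∈ S, c ≤ y) (hx : x ∈ S) :
    sInf (insert b S) ∈ Icc c x := by
  have hlower : c ∈ lowerBounds (insert b S) := by
    rintro y (rfl | hy)
    exacts [hb, hS y hy]
  exact ⟨le_csInf (insert_nonempty _ _) hlower, csInf_le ⟨c, hlower⟩ (mem_insert_of_mem _ hx)⟩

theorem IsCauchySolution.le_secondDeriv_of_le_apply {b σ ϱ r m ε s : ℝ}
    {h F k k' k'' : ℝ → ℝ} (hsol : IsCauchySolution b σ ϱ m h F ε s k k' k'') (hσ : 0 < σ)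
    (hϱ : 0 < ϱ) (hε : 0 ≤ ε) (hmono : MonotoneOn h (Icc 0 b)) (hFbd : ∀ z, |F z| ≤ 2 * r)
    {x : ℝ} (hx : x ∈ Icc 0 b) (hkx : s ≤ k x) :
    2 / σ ^ 2 * (ϱ * s - (2 * |m| * r + 2 * σ ^ 2 * ε * r ^ 2 + h b)) ≤ k'' x := by
  have hk'' : k'' x = 2 / σ ^ 2 *
      (ϱ * k x - m * F (k' x) - 1 / 2 * σ ^ 2 * ε * F (k' x) ^ 2 - h x) := by
    linear_combination hsol.2.2.2.1 x hx
  have hF := hFbd (k' x)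
  have hmF : m * F (k' x) ≤ |m| * (2 * r) := by
    calc m * F (k' x) ≤ |m| * |F (k' x)| := (le_abs_self _).trans (abs_mul _ _).le
      _ ≤ |m| * (2 * r) := mul_le_mul_of_nonneg_left hF (abs_nonneg m)
  have hF2 : 1 / 2 * σ ^ 2 * ε * F (k' x) ^ 2 ≤ 1 / 2 * σ ^ 2 * ε * (2 * r) ^ 2 :=
    mul_le_mul_of_nonneg_left (sq_le_sq' (abs_le.1 hF).1 (abs_le.1 hF).2) (by positivity)
  have hhx : h x ≤ h b := hmono hx ⟨hx.1.trans hx.2, le_rfl⟩ hx.2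
  have hϱk : ϱ * s ≤ ϱ * k x := mul_le_mul_of_nonneg_left hkx hϱ.le
  rw [hk'']
  exact mul_le_mul_of_nonneg_left (by linarith) (by positivity)

theorem stmt12_general (b σ ϱ r m ε : ℝ) (hb : 0 < b) (hσ : 0 < σ) (hϱ : 0 < ϱ) (hr : 0 < r)
    (hε : 0 ≤ ε) (h F : ℝ → ℝ)
    (hmono : MonotoneOn h (Icc (0:ℝ) b))
    (hFbd : ∀ z : ℝ, |F z| ≤ 2 * r)
    (s : ℝ)
    (hs : (2 * |m| * r + 2 * σ ^ 2 * ε * r ^ 2 + h b + r * σ ^ 2 / b) / ϱ < s)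
    (k k' k'' : ℝ → ℝ)
    (hsol : IsCauchySolution b σ ϱ m h F ε s k k' k'')
    (β : ℝ) (hβ : β = sInf (insert b {x : ℝ | x ∈ Ioc (0:ℝ) b ∧ r ≤ k' x})) :
    MonotoneOn k (Icc (0:ℝ) b) ∧
    (∀ x ∈ Icc (0:ℝ) b, 2 * r / b < k'' x) ∧
    β ≤ b / 2 ∧ b / 2 < b ∧
    0 < k'' β := by
  have hrb : 0 < 2 * r / b := by positivity
  have hbound : ∀ x ∈ Icc (0:ℝ) b, s ≤ k x → 2 * r / b < k'' x := by
    intro x hx hkx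
    rw [div_lt_iff₀ hϱ] at hs
    calc 2 * r / b = 2 / σ ^ 2 * (r * σ ^ 2 / b) := by field_simp
      _ < 2 / σ ^ 2 * (ϱ * s - (2 * |m| * r + 2 * σ ^ 2 * ε * r ^ 2 + h b)) := by
        gcongr; linarith
      _ ≤ k'' x := hsol.le_secondDeriv_of_le_apply hσ hϱ hε hmono hFbd hx hkx
  obtain ⟨hk, hk', hk''c, -, hk0, hk'0⟩ := hsol
  have hks := le_of_deriv_nonneg_of_secondDeriv_pos hk hk' hk''c hk'0.ge hk0.ge
    fun x hx hkx => hrb.trans (hbound x hx hkx)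
  have hk''gt : ∀ x ∈ Icc (0:ℝ) b, 2 * r / b < k'' x := fun x hx => hbound x hx (hks x hx)
  have h0 : (0:ℝ) ∈ Icc 0 b := left_mem_Icc.2 hb.le
  have hk'mono : MonotoneOn k' (Icc 0 b) := monotoneOn_Icc_of_hasDerivWithinAt_nonneg subset_rfl
    hk' fun x hx => (hrb.trans (hk''gt x (Ioo_subset_Icc_self hx))).le
  have hkmono : MonotoneOn k (Icc 0 b) := monotoneOn_Icc_of_hasDerivWithinAt_nonneg subset_rfl
    hk fun x hx => hk'0 ▸ hk'mono h0 (Ioo_subset_Icc_self hx) hx.1.le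
  have hhalf : b / 2 ∈ Ioc 0 b := ⟨half_pos hb, half_le_self hb.le⟩
  have hr_le : r ≤ k' (b / 2) := by
    have := add_mul_sub_le_of_le_hasDerivWithinAt hk'
      (fun y hy => (hk''gt y (Ioo_subset_Icc_self hy)).le) (Ioc_subset_Icc_self hhalf)
    rw [hk'0, zero_add, sub_zero] at this
    calc r = 2 * r / b * (b / 2) := by field_simp
      _ ≤ k' (b / 2) := this
  obtain ⟨hβ0, hβ_le⟩ : β ∈ Icc 0 (b / 2) :=
    hβ ▸ csInf_insert_mem_Icc hb.le (fun y hy => hy.1.1.le) ⟨hhalf, hr_le⟩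
  exact ⟨hkmono, hk''gt, hβ_le, half_lt_self hb,
    hrb.trans (hk''gt β ⟨hβ0, hβ_le.trans (half_le_self hb.le)⟩)⟩

/-- Assume in addition that h is nondecreasing.
If s > (2|m|r + 2σ²εr² + h(b) + rσ²/b)/ϱ, then: k^{(s)} is nondecreasing on [0,b];
(k^{(s)})''(x) > 2r/b for every x ∈ [0,b]; β^{(s)} ≤ b/2 < b; and
(k^{(s)})''(β^{(s)}) > 0, where
β^{(s)} = min(inf{x ∈ (0,b] : (k^{(s)})'(x) ≥ r}, b) (convention inf ∅ = +∞). -/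
theorem stmt12 (b σ ϱ r m ε : ℝ) (hb : 0 < b) (hσ : 0 < σ) (hϱ : 0 < ϱ) (hr : 0 < r)
    (hε : 0 ≤ ε) (h F : ℝ → ℝ)
    (hLip : ∃ K : NNReal, LipschitzOnWith K h (Icc (0:ℝ) b))
    (hmono : MonotoneOn h (Icc (0:ℝ) b))
    (hF1 : ContDiff ℝ 1 F) (hFid : ∀ z : ℝ, |z| ≤ r → F z = z)
    (hFbd : ∀ z : ℝ, |F z| ≤ 2 * r) (hF'bd : ∀ z : ℝ, |deriv F z| ≤ 1)
    (s : ℝ)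
    (hs : (2 * |m| * r + 2 * σ ^ 2 * ε * r ^ 2 + h b + r * σ ^ 2 / b) / ϱ < s)
    (k k' k'' : ℝ → ℝ)
    (hsol : IsCauchySolution b σ ϱ m h F ε s k k' k'')
    (β : ℝ) (hβ : β = sInf (insert b {x : ℝ | x ∈ Ioc (0:ℝ) b ∧ r ≤ k' x})) :
    MonotoneOn k (Icc (0:ℝ) b) ∧
    (∀ x ∈ Icc (0:ℝ) b, 2 * r / b < k'' x) ∧
    β ≤ b / 2 ∧ b / 2 < b ∧
    0 < k'' β :=
  stmt12_general b σ ϱ r m ε hb hσ hϱ hr hε h F hmono hFbd s hs k k' k'' hsol β hβ
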